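/- arXiv:1007.1449 — 2 statements merged into one kernel-verified Lean document; each statement's English description precedes it below -/
import Mathlib

section
/- Let (X, μ, T) be an ergodic measure-preserving system and n₁ : X → ℕ integrable with ∫ n₁ dμ < ∞. Then for μ-a.e. x, the sequence defined by a₀(x) = 0 and a_{k+1}(x) = a_k(x) + n₁(T^{a_k(x)}(x)) is nonlacunary, i.e. a_{k+1}(x)/a_k(x) → 1. -/
open MeasureTheory Filter

/-- A.e. `n₁(T^n x)/n → 0` for integrable `n₁`, via Borel–Cantelli. -/
lemma aux_tendsto_div {X : Type*} [MeasurableSpace X] (μ : Measure X) [IsProbabilityMeasure μ]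
    (T : X → X) (hT : MeasurePreserving T μ μ)
    (n₁ : X → ℕ) (hmeas : Measurable n₁)
    (hint : Integrable (fun x => (n₁ x : ℝ)) μ) :
    ∀ᵐ x ∂μ, Tendsto (fun n => (n₁ (T^[n] x) : ℝ) / n) atTop (nhds 0) := by
  have hcast : Measurable fun y => (n₁ y : ℝ) := measurable_from_top.comp hmeas
  have key : ∀ m : ℕ, ∀ᵐ x ∂μ, ∀ᶠ n in atTop,
      ((m + 1 : ℕ) : ℝ) * (n₁ (T^[n] x) : ℝ) ≤ n := by
    intro m
    set f : X → ℝ := fun y => ((m + 1 : ℕ) : ℝ) * (n₁ y : ℝ) with hf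
    have hfint : Integrable f μ := hint.const_mul _
    have hfnonneg : 0 ≤ f := fun y => by positivity
    letI : MeasureSpace X := ⟨μ⟩
    have hsum : (∑' j : ℕ, μ {y | f y ∈ Set.Ioi (j : ℝ)}) < ⊤ :=
      ProbabilityTheory.tsum_prob_mem_Ioi_lt_top hfint hfnonneg
    have hmeas_set : ∀ j : ℕ, MeasurableSet {y | f y ∈ Set.Ioi (j : ℝ)} := fun j =>
      (measurable_const.mul hcast) measurableSet_Ioi
    set s : ℕ → Set X := fun n => T^[n] ⁻¹' {y | f y ∈ Set.Ioi (n : ℝ)} with hs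
    have hsum' : (∑' n : ℕ, μ (s n)) ≠ ⊤ := by
      have : ∀ n : ℕ, μ (s n) = μ {y | f y ∈ Set.Ioi (n : ℝ)} := fun n =>
        (hT.iterate n).measure_preimage (hmeas_set n).nullMeasurableSet
      rw [tsum_congr this]
      exact hsum.ne
    filter_upwards [MeasureTheory.ae_eventually_notMem hsum'] with x hx
    refine hx.mono fun n hn => ?_
    have h2 : ¬ ((n : ℝ) < f (T^[n] x)) := hn
    exact not_lt.mp h2
  have key' : ∀ᵐ x ∂μ, ∀ m : ℕ, ∀ᶠ n in atTop,
      ((m + 1 : ℕ) : ℝ) * (n₁ (T^[n] x) : ℝ) ≤ n := (ae_all_iff).2 key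
  filter_upwards [key'] with x hx
  refine tendsto_order.2 ⟨fun a ha => ?_, fun a ha => ?_⟩
  · refine Eventually.of_forall fun n => lt_of_lt_of_le ha (by positivity)
  · obtain ⟨m, hm⟩ := exists_nat_one_div_lt ha
    filter_upwards [hx m, eventually_ge_atTop 1] with n hn hn1
    have hnpos : (0 : ℝ) < (n : ℝ) := by exact_mod_cast hn1
    have hmpos : (0 : ℝ) < ((m + 1 : ℕ) : ℝ) := by positivity
    have : (n₁ (T^[n] x) : ℝ) / n ≤ 1 / ((m + 1 : ℕ) : ℝ) := by
      rw [div_le_div_iff₀ hnpos hmpos]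
      linarith [hn]
    calc (n₁ (T^[n] x) : ℝ) / n ≤ 1 / ((m + 1 : ℕ) : ℝ) := this
      _ < a := by exact_mod_cast hm

/-- The iterated first-time sequence a₀ = 0, a_{k+1} = a_k + n₁(T^{a_k} x). -/
noncomputable def iterTimes {X : Type*} (T : X → X) (n₁ : X → ℕ) (x : X) : ℕ → ℕ
  | 0 => 0
  | k + 1 => iterTimes T n₁ x k + n₁ (T^[iterTimes T n₁ x k] x)

/-- Integrability of the first time implies nonlacunarity of the iterated
sequence of times, almost everywhere (abstract Corollary 3.10). -/
theorem stmt5 {X : Type*} [MeasurableSpace X] (μ : Measure X) [IsProbabilityMeasure μ]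
    (T : X → X) (hT : Ergodic T μ)
    (n₁ : X → ℕ) (hmeas : Measurable n₁) (hpos : ∀ x, 1 ≤ n₁ x)
    (hint : Integrable (fun x => (n₁ x : ℝ)) μ) :
    ∀ᵐ x ∂μ, Tendsto
      (fun k => (iterTimes T n₁ x (k + 1) : ℝ) / (iterTimes T n₁ x k : ℝ))
      atTop (nhds 1) := by
  filter_upwards [aux_tendsto_div μ T hT.toMeasurePreserving n₁ hmeas hint] with x hx
  set a : ℕ → ℕ := iterTimes T n₁ x with ha
  have hge : ∀ k, k ≤ a k := by
    intro k
    induction k with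
    | zero => exact Nat.zero_le _
    | succ k ih =>
      have : 1 ≤ n₁ (T^[a k] x) := hpos _
      calc k + 1 ≤ a k + n₁ (T^[a k] x) := Nat.add_le_add ih this
        _ = a (k + 1) := rfl
  have hatop : Tendsto a atTop atTop := tendsto_atTop_mono hge tendsto_id
  have hcomp : Tendsto (fun k => (n₁ (T^[a k] x) : ℝ) / (a k : ℝ)) atTop (nhds 0) :=
    hx.comp hatop
  have h1 : Tendsto (fun k => 1 + (n₁ (T^[a k] x) : ℝ) / (a k : ℝ)) atTop (nhds (1 + 0)) :=
    tendsto_const_nhds.add hcomp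
  rw [add_zero] at h1
  refine h1.congr' ?_
  filter_upwards [eventually_ge_atTop 1] with k hk
  have hapos : 0 < a k := Nat.lt_of_lt_of_le hk (hge k)
  have hkpos : (0 : ℝ) < (a k : ℝ) := by exact_mod_cast hapos
  have hrec : a (k + 1) = a k + n₁ (T^[a k] x) := rfl
  rw [hrec]
  push_cast
  rw [add_div, div_self hkpos.ne']
end

section
/- (Pliss' Lemma) Let c₂ > c₁ > 0, A ≥ c₂, and let a₁, …, a_N be real numbers with a_j ≤ A for all j and ∑_{j=1}^N a_j ≥ c₂ N. Then there exist l ≥ θN indices 1 ≤ n₁ < ⋯ < n_l ≤ N, with θ = (c₂ − c₁)/(A − c₁), such that ∑_{j=n+1}^{n_i} a_j ≥ c₁ (n_i − n) for every 0 ≤ n < n_i and every i = 1, …, l. -/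
/-- Pliss' Lemma: if a₁,…,a_N ≤ A and ∑ a_j ≥ c₂ N with 0 < c₁ < c₂ ≤ A, then
there exist l ≥ θN Pliss times n₁ < ⋯ < n_l ≤ N, θ = (c₂−c₁)/(A−c₁), such that
∑_{j=n+1}^{n_i} a_j ≥ c₁(n_i − n) for every 0 ≤ n < n_i. -/
theorem stmt8 (c₁ c₂ A : ℝ) (N : ℕ) (a : ℕ → ℝ)
    (hc₁ : 0 < c₁) (hc₁₂ : c₁ < c₂) (hc₂A : c₂ ≤ A) (hN : 0 < N)
    (hbdd : ∀ j ∈ Finset.Icc 1 N, a j ≤ A)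
    (hsum : c₂ * (N : ℝ) ≤ ∑ j ∈ Finset.Icc 1 N, a j) :
    ∃ (l : ℕ) (n : ℕ → ℕ),
      ((c₂ - c₁) / (A - c₁)) * (N : ℝ) ≤ (l : ℝ) ∧
      StrictMonoOn n (Set.Icc 1 l) ∧
      (∀ i ∈ Set.Icc 1 l, 1 ≤ n i ∧ n i ≤ N) ∧
      (∀ i ∈ Set.Icc 1 l, ∀ m : ℕ, m < n i →
        c₁ * ((n i : ℝ) - (m : ℝ)) ≤ ∑ j ∈ Finset.Icc (m + 1) (n i), a j) := by
  classical
  set S : ℕ → ℝ := fun n => ∑ j ∈ Finset.Ioc 0 n, (a j - c₁) with hSdef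
  set R : Finset ℕ := (Finset.Icc 1 N).filter (fun n => ∀ m < n, S m ≤ S n) with hRdef
  have hAc : (0:ℝ) < A - c₁ := by linarith
  -- key counting estimate
  have key : ∀ m, m ≤ N → S m ≤ (A - c₁) * ((R.filter (· ≤ m)).card : ℝ) := by
    intro m
    induction m using Nat.strong_induction_on with
    | _ m ih =>
      intro hmN
      rcases Nat.eq_zero_or_pos m with h0 | h1
      · subst h0
        simp only [hSdef, Finset.Ioc_self, Finset.sum_empty]
        positivity
      by_cases hrec : ∀ k < m, S k ≤ S m
      · -- m is a record
        have hmR : m ∈ R := by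
          rw [hRdef]; exact Finset.mem_filter.mpr ⟨Finset.mem_Icc.mpr ⟨h1, hmN⟩, hrec⟩
        have hsplit : S m = S (m-1) + (a m - c₁) := by
          have hins : Finset.Ioc 0 m = insert m (Finset.Ioc 0 (m-1)) := by
            ext x; simp; omega
          simp only [hSdef]
          rw [hins, Finset.sum_insert (by simp)]
          ring
        have hcard : (R.filter (· ≤ m)) = insert m (R.filter (· ≤ m - 1)) := by
          ext x
          simp only [Finset.mem_filter, Finset.mem_insert]
          constructor
          · rintro ⟨hx, hxm⟩
            rcases eq_or_lt_of_le hxm with h | h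
            · exact Or.inl h
            · exact Or.inr ⟨hx, by omega⟩
          · rintro (rfl | ⟨hx, hxm⟩)
            · exact ⟨hmR, le_refl _⟩
            · exact ⟨hx, by omega⟩
        have hnot : m ∉ R.filter (· ≤ m - 1) := by
          simp only [Finset.mem_filter]
          rintro ⟨-, h⟩; omega
        have hIH := ih (m-1) (by omega) (by omega)
        have ham : a m ≤ A := hbdd m (Finset.mem_Icc.mpr ⟨h1, hmN⟩)
        have hmono : ((R.filter (· ≤ m - 1)).card : ℝ) ≤ ((R.filter (· ≤ m)).card : ℝ) := by
          have hsub : R.filter (· ≤ m - 1) ⊆ R.filter (· ≤ m) := by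
            intro x hx
            simp only [Finset.mem_filter] at hx ⊢
            exact ⟨hx.1, by omega⟩
          exact_mod_cast Finset.card_le_card hsub
        rw [hcard, Finset.card_insert_of_notMem hnot]
        push_cast
        linarith
      · push_neg at hrec
        obtain ⟨k, hk, hSk⟩ := hrec
        have hIH := ih k hk (by omega)
        have hmono : ((R.filter (· ≤ k)).card : ℝ) ≤ ((R.filter (· ≤ m)).card : ℝ) := by
          have hsub : R.filter (· ≤ k) ⊆ R.filter (· ≤ m) := by
            intro x hx
            simp only [Finset.mem_filter] at hx ⊢
            exact ⟨hx.1, by omega⟩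
          exact_mod_cast Finset.card_le_card hsub
        nlinarith
  -- lower bound on l = R.card
  set l := R.card with hldef
  have hRfull : R.filter (· ≤ N) = R := by
    apply Finset.filter_true_of_mem
    intro x hx
    rw [hRdef] at hx
    exact (Finset.mem_Icc.mp (Finset.mem_filter.mp hx).1).2
  have hSN : (c₂ - c₁) * (N:ℝ) ≤ S N := by
    have : S N = (∑ j ∈ Finset.Icc 1 N, a j) - c₁ * N := by
      rw [hSdef]
      simp only
      rw [Finset.sum_sub_distrib, Finset.sum_const]
      have : Finset.Ioc 0 N = Finset.Icc 1 N := by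
        ext x; simp [Nat.lt_iff_add_one_le]
      rw [this, nsmul_eq_mul, Nat.card_Icc]
      have hc : (N + 1 - 1 : ℕ) = N := by omega
      rw [hc]
      ring
    rw [this]; linarith
  have hlb : ((c₂ - c₁) / (A - c₁)) * (N : ℝ) ≤ (l : ℝ) := by
    rw [div_mul_eq_mul_div, div_le_iff₀ hAc]
    have := key N le_rfl
    rw [hRfull] at this
    calc (c₂ - c₁) * (N:ℝ) ≤ S N := hSN
      _ ≤ (A - c₁) * l := this
      _ = (l:ℝ) * (A - c₁) := by ring
  -- enumeration
  set e := R.orderEmbOfFin (rfl : R.card = l) with hedef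
  set n : ℕ → ℕ := fun i => if h : i - 1 < l then e ⟨i-1, h⟩ else 0 with hndef
  refine ⟨l, n, hlb, ?_, ?_, ?_⟩
  · intro i hi j hj hij
    simp only [Set.mem_Icc] at hi hj
    have hi' : i - 1 < l := by omega
    have hj' : j - 1 < l := by omega
    simp only [hndef, dif_pos hi', dif_pos hj']
    exact e.strictMono (by simp [Fin.lt_def]; omega)
  · intro i hi
    simp only [Set.mem_Icc] at hi
    have hi' : i - 1 < l := by omega
    have hmem : n i ∈ R := by
      simp only [hndef, dif_pos hi']
      exact Finset.orderEmbOfFin_mem R rfl _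
    rw [hRdef] at hmem
    have := (Finset.mem_Icc.mp (Finset.mem_filter.mp hmem).1)
    exact this
  · intro i hi m hm
    simp only [Set.mem_Icc] at hi
    have hi' : i - 1 < l := by omega
    have hmem : n i ∈ R := by
      simp only [hndef, dif_pos hi']
      exact Finset.orderEmbOfFin_mem R rfl _
    rw [hRdef] at hmem
    have hrec := (Finset.mem_filter.mp hmem).2
    have hSm : S m ≤ S (n i) := hrec m hm
    have hsplit : S (n i) - S m = ∑ j ∈ Finset.Ioc m (n i), (a j - c₁) := by
      have := Finset.sum_Ioc_consecutive (fun j => a j - c₁) (Nat.zero_le m) hm.le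
      rw [hSdef]; simp only
      linarith [this]
    have hIcc : Finset.Icc (m+1) (n i) = Finset.Ioc m (n i) := by
      ext x; simp
    have hcard : ((Finset.Ioc m (n i)).card : ℝ) = (n i : ℝ) - m := by
      rw [Nat.card_Ioc]
      have := hm.le
      push_cast [Nat.cast_sub hm.le]
      ring
    rw [hIcc]
    have : ∑ j ∈ Finset.Ioc m (n i), (a j - c₁)
        = (∑ j ∈ Finset.Ioc m (n i), a j) - c₁ * ((n i:ℝ) - m) := by
      rw [Finset.sum_sub_distrib, Finset.sum_const, nsmul_eq_mul, hcard]
      ring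
    rw [this] at hsplit
    linarith
end
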